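/- Let n = |V|, m = |E| with n ≤ m, let b : V → ℝ satisfy Σ_{i∈V} b_i = 0, let F ⊆ E be linear acyclic, and let Δ > 0. Suppose f is a (Δ,F)-feasible F-pseudoflow with Ex_b(f) ≤ nΔ and 0 ≤ f_a ≤ (2n+m+1)Δ for every a ∉ F, and suppose f̂ is F-tight with Ex_b(f̂) ≤ nΔ. Then f̂ is (4(2n+m+4)mΔ, F)-feasible. -/
import Mathlib
open Finset

def netInflow {V E : Type*} [Fintype E] [DecidableEq V]
    (tail head : E → V) (x : E → ℝ) (i : V) : ℝ :=
  (∑ a ∈ Finset.univ.filter (fun a => head a = i), x a)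
    - (∑ a ∈ Finset.univ.filter (fun a => tail a = i), x a)

section aux
variable {V E : Type*} [Fintype V] [Fintype E] [DecidableEq V]

lemma sum_fiber_eq (h : E → V) (x : E → ℝ) :
    ∑ i : V, ∑ a ∈ univ.filter (fun a => h a = i), x a = ∑ a : E, x a :=
  Finset.sum_fiberwise univ h x

lemma sum_netInflow (tail head : E → V) (x : E → ℝ) :
    ∑ i : V, netInflow tail head x i = 0 := by
  simp only [netInflow, Finset.sum_sub_distrib, sum_fiber_eq, sub_self]

omit [Fintype V] in
lemma netInflow_sub (tail head : E → V) (x y : E → ℝ) (i : V) :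
    netInflow tail head (fun a => x a - y a) i
      = netInflow tail head x i - netInflow tail head y i := by
  simp only [netInflow, Finset.sum_sub_distrib]; ring

lemma abs_netInflow_sum_le (tail head : E → V) (x : E → ℝ) :
    ∑ i : V, |netInflow tail head x i| ≤ 2 * ∑ a : E, |x a| := by
  have h : ∀ i, |netInflow tail head x i| ≤
      (∑ a ∈ univ.filter (fun a => head a = i), |x a|)
      + ∑ a ∈ univ.filter (fun a => tail a = i), |x a| := by
    intro i
    refine (abs_sub _ _).trans ?_
    gcongr <;> exact Finset.abs_sum_le_sum_abs _ _
  calc ∑ i, |netInflow tail head x i|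
      ≤ ∑ i : V, ((∑ a ∈ univ.filter (fun a => head a = i), |x a|)
        + ∑ a ∈ univ.filter (fun a => tail a = i), |x a|) :=
        Finset.sum_le_sum (fun i _ => h i)
    _ = 2 * ∑ a : E, |x a| := by
        rw [Finset.sum_add_distrib, sum_fiber_eq, sum_fiber_eq]; ring

omit [DecidableEq V] in
lemma sum_abs_eq_two_max (t : V → ℝ) (ht : ∑ i : V, t i = 0) :
    ∑ i : V, |t i| = 2 * ∑ i : V, max (t i) 0 := by
  have h : ∀ i, |t i| = 2 * max (t i) 0 - t i := by
    intro i
    rcases le_total 0 (t i) with h | h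
    · rw [abs_of_nonneg h, max_eq_left h]; ring
    · rw [abs_of_nonpos h, max_eq_right h]; ring
  simp only [h]
  rw [Finset.sum_sub_distrib, ht, Finset.mul_sum]; ring

omit [Fintype V] in
lemma sum_restrict_eq (R : Finset V) (h : E → V) (x : E → ℝ) :
    ∑ i ∈ R, ∑ a ∈ univ.filter (fun a => h a = i), x a
      = ∑ a : E, if h a ∈ R then x a else 0 := by
  have h1 : ∀ i ∈ R, ∑ a ∈ univ.filter (fun a => h a = i), x a
      = ∑ a : E, if h a = i then x a else 0 := by
    intro i _; rw [Finset.sum_filter]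
  rw [Finset.sum_congr rfl h1, Finset.sum_comm]
  exact Finset.sum_congr rfl (fun a _ => Finset.sum_ite_eq R (h a) (fun _ => x a))

end aux

set_option maxHeartbeats 1000000 in
/-- key proximity lemma for Trial-and-Error, with the safe constant
`4(2n+m+4)m`: with `n = |V| ≤ m = |E|`, `Σ b = 0`, `F` linear acyclic, and `Δ > 0`,
if `f` is a `(Δ,F)`-feasible `F`-pseudoflow with `Ex_b(f) ≤ nΔ` and
`0 ≤ f_a ≤ (2n+m+1)Δ` for `a ∉ F`, and `f̂` is `F`-tight with `Ex_b(f̂) ≤ nΔ`, then `f̂`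
is `(4(2n+m+4)mΔ, F)`-feasible. -/
theorem stmt_10 {V E : Type*} [Fintype V] [Fintype E] [DecidableEq V]
    (tail head : E → V) (C C' : E → ℝ → ℝ)
    (hconv : ∀ a, ConvexOn ℝ Set.univ (C a))
    (hderiv : ∀ a t, HasDerivAt (C a) (C' a t) t)
    (hcont : ∀ a, Continuous (C' a))
    (hdich : ∀ a, (∃ γ, ∀ t, C' a t = γ) ∨ StrictMono (C' a))
    (hnm : Fintype.card V ≤ Fintype.card E)
    (b : V → ℝ) (hb : ∑ i : V, b i = 0)
    (F : Finset E)
    (hacyc : ¬ ∃ k : ℕ, ∃ (c : Fin (k + 1) → E) (s : Fin (k + 1) → Bool),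
      (∀ i, c i ∈ F ∧ ∃ γ, ∀ t, C' (c i) t = γ) ∧
      Function.Injective c ∧
      Function.Injective (fun i => if s i then tail (c i) else head (c i)) ∧
      ∀ i : Fin (k + 1), (if s i then head (c i) else tail (c i)) =
        (if s (i + 1) then tail (c (i + 1)) else head (c (i + 1))))
    (Δ : ℝ) (hΔ : 0 < Δ)
    (f : E → ℝ)
    (hfP : ∀ a, a ∉ F → 0 ≤ f a)
    (hfeas : ∃ π : V → ℝ, ∀ a, (π (head a) - π (tail a) ≤ C' a (f a + Δ)) ∧
      ((a ∈ F ∨ Δ ≤ f a) → C' a (f a - Δ) ≤ π (head a) - π (tail a)))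
    (hEx : (∑ i : V, max (netInflow tail head f i - b i) 0) ≤ (Fintype.card V : ℝ) * Δ)
    (hbound : ∀ a, a ∉ F →
      f a ≤ (2 * (Fintype.card V : ℝ) + (Fintype.card E : ℝ) + 1) * Δ)
    (fhat : E → ℝ)
    (hfhat0 : ∀ a, a ∉ F → fhat a = 0)
    (hfhattight : ∃ π : V → ℝ, ∀ a ∈ F, π (head a) - π (tail a) = C' a (fhat a))
    (hExhat : (∑ i : V, max (netInflow tail head fhat i - b i) 0) ≤
      (Fintype.card V : ℝ) * Δ) :
    ∃ π : V → ℝ, ∀ a,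
      (π (head a) - π (tail a) ≤ C' a (fhat a +
        4 * (2 * (Fintype.card V : ℝ) + (Fintype.card E : ℝ) + 4) *
          (Fintype.card E : ℝ) * Δ)) ∧
      ((a ∈ F ∨ 4 * (2 * (Fintype.card V : ℝ) + (Fintype.card E : ℝ) + 4) *
          (Fintype.card E : ℝ) * Δ ≤ fhat a) →
        C' a (fhat a - 4 * (2 * (Fintype.card V : ℝ) + (Fintype.card E : ℝ) + 4) *
          (Fintype.card E : ℝ) * Δ) ≤ π (head a) - π (tail a)) := by
  classical
  obtain ⟨π, hπ⟩ := hfeas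
  obtain ⟨πh, hπh⟩ := hfhattight
  rcases isEmpty_or_nonempty E with hE | hE
  · exact ⟨fun _ => 0, fun a => (hE.false a).elim⟩
  set n : ℝ := (Fintype.card V : ℝ) with hn
  set m : ℝ := (Fintype.card E : ℝ) with hm
  set D : ℝ := 4 * (2 * n + m + 4) * m * Δ with hDdef
  have hm1 : (1 : ℝ) ≤ m := by
    rw [hm]; exact_mod_cast Nat.one_le_iff_ne_zero.mpr Fintype.card_ne_zero
  have hnm' : n ≤ m := by rw [hn, hm]; exact_mod_cast hnm
  have hn0 : (0 : ℝ) ≤ n := by rw [hn]; positivity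
  have hsq : (0 : ℝ) ≤ m * m - 1 := by nlinarith
  have h_a : (0 : ℝ) ≤ n * ((m - 1) * Δ) :=
    mul_nonneg hn0 (mul_nonneg (by linarith) hΔ.le)
  have h_b : (0 : ℝ) ≤ (m - 1) * Δ := mul_nonneg (by linarith) hΔ.le
  have h_c : (0 : ℝ) ≤ (m * m - 1) * Δ := mul_nonneg hsq hΔ.le
  have h_d : (0 : ℝ) ≤ n * Δ := mul_nonneg hn0 hΔ.le
  have hD3 : 3 * Δ ≤ D := by rw [hDdef]; nlinarith [h_a, h_b, h_c, h_d]
  have hD0 : 0 < D := by linarith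
  have hD2 : 2 * Δ ≤ D - Δ := by linarith
  have hDbig : (2 * n + m + 2) * Δ ≤ D := by rw [hDdef]; nlinarith [h_a, h_b, h_c, h_d]
  have hmono : ∀ a, Monotone (C' a) := by
    intro a; rcases hdich a with ⟨γ, hγ⟩ | h
    · intro s t _; simp [hγ]
    · exact h.monotone
  set g : E → ℝ := fun a => fhat a - f a with hgdef
  -- the key proximity bound on nonlinear arcs of F
  have key : ∀ a0 ∈ F, StrictMono (C' a0) → |g a0| ≤ D - Δ := by
    intro a0 ha0F ha0s
    by_contra hcon
    push_neg at hcon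
    -- residual step relation on high-difference arcs of F
    set step : V → V → Prop := fun u v => ∃ a, (a ∈ F ∧ 2 * Δ < |g a|) ∧
      ((0 < g a ∧ tail a = u ∧ head a = v) ∨ (g a < 0 ∧ head a = u ∧ tail a = v))
      with hstepdef
    set φ : V → ℝ := fun i => πh i - π i with hφdef
    have hstepφ : ∀ u v, step u v → φ u ≤ φ v := by
      intro u v huv
      rw [hstepdef] at huv
      obtain ⟨a, ⟨haF, hag⟩, hor⟩ := huv
      have htight := hπh a haF
      rcases hor with ⟨hpos, htl, hhd⟩ | ⟨hneg, hhd, htl⟩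
      · have h2 : 2 * Δ < g a := by rwa [abs_of_pos hpos] at hag
        have hup : π (head a) - π (tail a) ≤ C' a (fhat a) := by
          refine (hπ a).1.trans (hmono a ?_)
          have hga : g a = fhat a - f a := rfl
          linarith
        subst htl hhd
        simp only [hφdef]; linarith
      · have h2 : 2 * Δ < -g a := by rwa [abs_of_neg hneg] at hag
        have hlo : C' a (fhat a) ≤ π (head a) - π (tail a) := by
          refine le_trans (hmono a ?_) ((hπ a).2 (Or.inl haF))
          have hga : g a = fhat a - f a := rfl
          linarith
        subst htl hhd
        simp only [hφdef]; linarith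
    have hchain : ∀ s v : V, Relation.ReflTransGen step s v → φ s ≤ φ v := by
      intro s v h
      induction h with
      | refl => exact le_refl _
      | tail _ h2 ih => exact ih.trans (hstepφ _ _ h2)
    have ha0A : a0 ∈ F ∧ 2 * Δ < |g a0| := ⟨ha0F, lt_of_le_of_lt hD2 hcon⟩
    set g' : E → ℝ := fun a => if a ∈ F ∧ 2 * Δ < |g a| then g a else 0 with hg'def
    have hg'a0 : g' a0 = g a0 := by rw [hg'def]; exact if_pos ha0A
    -- case 1: the other endpoint of a0 is reachable: contradiction via φ
    have reach : ∀ s t : V,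
        ((0 < g a0 ∧ tail a0 = t ∧ head a0 = s) ∨ (g a0 < 0 ∧ head a0 = t ∧ tail a0 = s)) →
        Relation.ReflTransGen step s t → False := by
      intro s t hsign hreach
      have hch := hchain s t hreach
      have htight := hπh a0 ha0F
      rcases hsign with ⟨hpos, htl, hhd⟩ | ⟨hneg, hhd, htl⟩
      · have hDg : D - Δ < g a0 := by rwa [abs_of_pos hpos] at hcon
        have hstrict : C' a0 (f a0 + Δ) < C' a0 (fhat a0) := by
          apply ha0s
          have hga : g a0 = fhat a0 - f a0 := rfl
          linarith
        have hup := (hπ a0).1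
        subst htl hhd
        simp only [hφdef] at hch
        linarith
      · have hDg : D - Δ < -g a0 := by rwa [abs_of_neg hneg] at hcon
        have hstrict : C' a0 (fhat a0) < C' a0 (f a0 - Δ) := by
          apply ha0s
          have hga : g a0 = fhat a0 - f a0 := rfl
          linarith
        have hlo := (hπ a0).2 (Or.inl ha0F)
        subst htl hhd
        simp only [hφdef] at hch
        linarith
    -- case 2: not reachable: contradiction via a cut argument
    have cut : ∀ s t : V,
        ((0 < g a0 ∧ tail a0 = t ∧ head a0 = s) ∨ (g a0 < 0 ∧ head a0 = t ∧ tail a0 = s)) →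
        ¬ Relation.ReflTransGen step s t → False := by
      intro s t hsign hreach
      set R : Finset V := univ.filter (fun v => Relation.ReflTransGen step s v) with hR
      have hsR : s ∈ R := mem_filter.mpr ⟨mem_univ _, Relation.ReflTransGen.refl⟩
      have htR : t ∉ R := fun h => hreach (mem_filter.mp h).2
      set τ : E → ℝ := fun a =>
        (if head a ∈ R then g' a else 0) - (if tail a ∈ R then g' a else 0) with hτdef
      have hsum : ∑ i ∈ R, netInflow tail head g' i = ∑ a : E, τ a := by
        simp only [netInflow, hτdef]
        rw [Finset.sum_sub_distrib, sum_restrict_eq, sum_restrict_eq,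
          ← Finset.sum_sub_distrib]
      have hτ0 : ∀ a, 0 ≤ τ a := by
        intro a
        simp only [hτdef]
        by_cases hA : a ∈ F ∧ 2 * Δ < |g a|
        · have hg'a : g' a = g a := by rw [hg'def]; exact if_pos hA
          by_cases hh : head a ∈ R <;> by_cases ht : tail a ∈ R
          · rw [if_pos hh, if_pos ht, sub_self]
          · rw [if_pos hh, if_neg ht, sub_zero, hg'a]
            by_contra hlt
            push_neg at hlt
            have hst : step (head a) (tail a) := by
              rw [hstepdef]
              exact ⟨a, hA, Or.inr ⟨hlt, rfl, rfl⟩⟩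
            have : Relation.ReflTransGen step s (tail a) :=
              Relation.ReflTransGen.tail (mem_filter.mp hh).2 hst
            exact ht (mem_filter.mpr ⟨mem_univ _, this⟩)
          · rw [if_neg hh, if_pos ht, zero_sub, neg_nonneg, hg'a]
            by_contra hlt
            push_neg at hlt
            have hst : step (tail a) (head a) := by
              rw [hstepdef]
              exact ⟨a, hA, Or.inl ⟨hlt, rfl, rfl⟩⟩
            have : Relation.ReflTransGen step s (head a) :=
              Relation.ReflTransGen.tail (mem_filter.mp ht).2 hst
            exact hh (mem_filter.mpr ⟨mem_univ _, this⟩)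
          · rw [if_neg hh, if_neg ht, sub_self]
        · have hg'a : g' a = 0 := by rw [hg'def]; exact if_neg hA
          rw [hg'a]
          simp
      have hτa0 : D - Δ < τ a0 := by
        simp only [hτdef]
        rcases hsign with ⟨hpos, htl, hhd⟩ | ⟨hneg, hhd, htl⟩
        · have hDg : D - Δ < g a0 := by rwa [abs_of_pos hpos] at hcon
          rw [hhd, htl, if_pos hsR, if_neg htR, hg'a0, sub_zero]
          exact hDg
        · have hDg : D - Δ < -g a0 := by rwa [abs_of_neg hneg] at hcon
          rw [hhd, htl, if_neg htR, if_pos hsR, hg'a0, zero_sub]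
          linarith
      have h1 : D - Δ < ∑ a : E, τ a :=
        lt_of_lt_of_le hτa0 (Finset.single_le_sum (fun a _ => hτ0 a) (mem_univ a0))
      have h2 : ∑ i ∈ R, netInflow tail head g' i
          ≤ ∑ i : V, max (netInflow tail head g' i) 0 := by
        calc ∑ i ∈ R, netInflow tail head g' i
            ≤ ∑ i ∈ R, max (netInflow tail head g' i) 0 :=
              Finset.sum_le_sum (fun i _ => le_max_left _ _)
          _ ≤ ∑ i : V, max (netInflow tail head g' i) 0 :=
              Finset.sum_le_sum_of_subset_of_nonneg (subset_univ R)
                (fun i _ _ => le_max_right _ _)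
      have h3 : ∑ i : V, max (netInflow tail head g' i) 0
          = (∑ i : V, |netInflow tail head g' i|) / 2 := by
        rw [sum_abs_eq_two_max _ (sum_netInflow tail head g')]; ring
      have hsplit : ∀ i, |netInflow tail head g' i|
          ≤ |netInflow tail head g i| + |netInflow tail head (fun a => g a - g' a) i| := by
        intro i
        have hni := netInflow_sub tail head g g' i
        have h' : netInflow tail head g' i
            = netInflow tail head g i - netInflow tail head (fun a => g a - g' a) i := by
          rw [hni]; ring
        rw [h']
        exact abs_sub _ _
      have h5 : ∑ i : V, |netInflow tail head g i| ≤ 4 * n * Δ := by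
        have hf0 : ∑ i : V, (netInflow tail head f i - b i) = 0 := by
          rw [Finset.sum_sub_distrib, sum_netInflow, hb, sub_self]
        have hfh0 : ∑ i : V, (netInflow tail head fhat i - b i) = 0 := by
          rw [Finset.sum_sub_distrib, sum_netInflow, hb, sub_self]
        have hf2 : ∑ i : V, |netInflow tail head f i - b i| ≤ 2 * n * Δ := by
          rw [sum_abs_eq_two_max _ hf0]; linarith
        have hfh2 : ∑ i : V, |netInflow tail head fhat i - b i| ≤ 2 * n * Δ := by
          rw [sum_abs_eq_two_max _ hfh0]; linarith
        have hgi : ∀ i, |netInflow tail head g i|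
            ≤ |netInflow tail head fhat i - b i| + |netInflow tail head f i - b i| := by
          intro i
          have hni := netInflow_sub tail head fhat f i
          have hgi' : netInflow tail head g i
              = (netInflow tail head fhat i - b i) - (netInflow tail head f i - b i) := by
            rw [hgdef, hni]; ring
          rw [hgi']
          exact abs_sub _ _
        calc ∑ i : V, |netInflow tail head g i|
            ≤ ∑ i : V, (|netInflow tail head fhat i - b i|
                + |netInflow tail head f i - b i|) :=
              Finset.sum_le_sum (fun i _ => hgi i)
          _ = (∑ i : V, |netInflow tail head fhat i - b i|)
                + ∑ i : V, |netInflow tail head f i - b i| := Finset.sum_add_distrib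
          _ ≤ 4 * n * Δ := by linarith
      have h7 : ∑ a : E, |g a - g' a| ≤ m * ((2 * n + m + 1) * Δ) := by
        have hper : ∀ a : E, |g a - g' a| ≤ (2 * n + m + 1) * Δ := by
          intro a
          by_cases hA : a ∈ F ∧ 2 * Δ < |g a|
          · have hg'a : g' a = g a := by rw [hg'def]; exact if_pos hA
            rw [hg'a, sub_self, abs_zero]
            nlinarith [h_a, h_b, h_c, h_d]
          · have hg'a : g' a = 0 := by rw [hg'def]; exact if_neg hA
            rw [hg'a, sub_zero]
            by_cases haF : a ∈ F
            · have hle : ¬ (2 * Δ < |g a|) := fun h => hA ⟨haF, h⟩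
              push_neg at hle
              nlinarith [h_a, h_b, h_c, h_d]
            · have h0 : fhat a = 0 := hfhat0 a haF
              have hgval : g a = -f a := by rw [hgdef]; simp [h0]
              rw [hgval, abs_neg, abs_of_nonneg (hfP a haF)]
              exact hbound a haF
        calc ∑ a : E, |g a - g' a| ≤ ∑ _a : E, (2 * n + m + 1) * Δ :=
              Finset.sum_le_sum (fun a _ => hper a)
          _ = m * ((2 * n + m + 1) * Δ) := by
              rw [Finset.sum_const, card_univ, nsmul_eq_mul, hm]
      have h6 : ∑ i : V, |netInflow tail head (fun a => g a - g' a) i|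
          ≤ 2 * (m * ((2 * n + m + 1) * Δ)) := by
        calc ∑ i : V, |netInflow tail head (fun a => g a - g' a) i|
            ≤ 2 * ∑ a : E, |g a - g' a| := abs_netInflow_sum_le tail head _
          _ ≤ 2 * (m * ((2 * n + m + 1) * Δ)) := by linarith
      have h4 : ∑ i : V, |netInflow tail head g' i|
          ≤ 4 * n * Δ + 2 * (m * ((2 * n + m + 1) * Δ)) := by
        calc ∑ i : V, |netInflow tail head g' i|
            ≤ ∑ i : V, (|netInflow tail head g i|
                + |netInflow tail head (fun a => g a - g' a) i|) :=
              Finset.sum_le_sum (fun i _ => hsplit i)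
          _ = (∑ i : V, |netInflow tail head g i|)
              + ∑ i : V, |netInflow tail head (fun a => g a - g' a) i| :=
              Finset.sum_add_distrib
          _ ≤ 4 * n * Δ + 2 * (m * ((2 * n + m + 1) * Δ)) := by linarith
      rw [hsum] at h2
      have hfinal : D - Δ < (4 * n * Δ + 2 * (m * ((2 * n + m + 1) * Δ))) / 2 := by
        calc D - Δ < ∑ a : E, τ a := h1
          _ ≤ ∑ i : V, max (netInflow tail head g' i) 0 := h2
          _ = (∑ i : V, |netInflow tail head g' i|) / 2 := h3
          _ ≤ (4 * n * Δ + 2 * (m * ((2 * n + m + 1) * Δ))) / 2 := by linarith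
      rw [hDdef] at hfinal
      nlinarith [h_a, h_b, h_c, h_d]
    rcases lt_trichotomy (g a0) 0 with hneg | hzero | hpos
    · by_cases hr : Relation.ReflTransGen step (tail a0) (head a0)
      · exact reach _ _ (Or.inr ⟨hneg, rfl, rfl⟩) hr
      · exact cut _ _ (Or.inr ⟨hneg, rfl, rfl⟩) hr
    · rw [hzero, abs_zero] at hcon; linarith
    · by_cases hr : Relation.ReflTransGen step (head a0) (tail a0)
      · exact reach _ _ (Or.inl ⟨hpos, rfl, rfl⟩) hr
      · exact cut _ _ (Or.inl ⟨hpos, rfl, rfl⟩) hr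
  -- final assembly: the witness π of f works
  refine ⟨π, fun a => ⟨?_, ?_⟩⟩
  · -- upper bound
    by_cases haF : a ∈ F
    · rcases hdich a with ⟨γ, hγ⟩ | hsm
      · rw [hγ]
        have h := (hπ a).1
        rwa [hγ] at h
      · have hk := key a haF hsm
        obtain ⟨hk1, hk2⟩ := abs_le.mp hk
        refine (hπ a).1.trans (hmono a ?_)
        have hga : g a = fhat a - f a := rfl
        linarith
    · have h0 : fhat a = 0 := hfhat0 a haF
      refine (hπ a).1.trans (hmono a ?_)
      have hbd := hbound a haF
      rw [h0]
      linarith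
  · -- lower bound
    intro hcase
    by_cases haF : a ∈ F
    · rcases hdich a with ⟨γ, hγ⟩ | hsm
      · rw [hγ]
        have h := (hπ a).2 (Or.inl haF)
        rwa [hγ] at h
      · have hk := key a haF hsm
        obtain ⟨hk1, hk2⟩ := abs_le.mp hk
        refine le_trans (hmono a ?_) ((hπ a).2 (Or.inl haF))
        have hga : g a = fhat a - f a := rfl
        linarith
    · exfalso
      rcases hcase with h | h
      · exact haF h
      · rw [hfhat0 a haF] at h
        linarith
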